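/- arXiv:2003.03399 — 3 statements merged into one kernel-verified Lean document; each statement's English description precedes it below -/
import Mathlib

section
/- Let y solve the ODE y'(t) = f(y(t),t) on [0,T] with y(0) = y₀, let Y : [0,T] → ℝ^d be continuously differentiable with Y(0) = y₀, and set e = y − Y. Let H(t) be the averaged Jacobian satisfying H(t)(y(t) − Y(t)) = f(y(t),t) − f(Y(t),t), and let φ solve the adjoint problem −φ'(t) = H(t)ᵀ φ(t) + ψ(t) on [0,T] with φ(T) = ψ_T. Then ∫₀ᵀ (e(t), ψ(t)) dt + (e(T), ψ_T) = ∫₀ᵀ (f(Y(t),t) − Y'(t), φ(t)) dt. -/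
open Matrix intervalIntegral

/-!
Let `e = y - Y`. Since `H e = f(y) - f(Y)`, the error solves the linear equation
`e' = H e + r` with residual `r = f(Y) - Y'`, and `e(0) = 0`. For this equation and the adjoint
equation `-φ' = Hᵀ φ + ψ`, the `H`-terms cancel in the derivative of the pairing `e ⬝ᵥ φ`
(because `e ⬝ᵥ Hᵀ φ = φ ⬝ᵥ H e`), leaving `(e ⬝ᵥ φ)' = r ⬝ᵥ φ - e ⬝ᵥ ψ`. Integrating over
`[0, T]` gives the representation.
-/

theorem ContinuousOn.dotProduct {X ι R : Type*} [TopologicalSpace X] [TopologicalSpace R]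
    [Fintype ι] [Mul R] [AddCommMonoid R] [ContinuousAdd R] [ContinuousMul R]
    {u v : X → ι → R} {s : Set X} (hu : ContinuousOn u s) (hv : ContinuousOn v s) :
    ContinuousOn (fun x => u x ⬝ᵥ v x) s :=
  (continuous_fst.dotProduct continuous_snd).comp_continuousOn (hu.prodMk hv)

section Calculus

variable {𝕜 ι : Type*} [NontriviallyNormedField 𝕜] [Fintype ι]

theorem HasDerivAt.dotProduct {u v : 𝕜 → ι → 𝕜} {u' v' : ι → 𝕜} {t : 𝕜}
    (hu : HasDerivAt u u' t) (hv : HasDerivAt v v' t) :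
    HasDerivAt (fun s => u s ⬝ᵥ v s) (u' ⬝ᵥ v t + u t ⬝ᵥ v') t := by
  simp only [_root_.dotProduct, ← Finset.sum_add_distrib]
  exact HasDerivAt.fun_sum fun i _ => (hasDerivAt_pi.mp hu i).mul (hasDerivAt_pi.mp hv i)

theorem HasDerivAt.dotProduct_of_adjoint {e φ ψ : 𝕜 → ι → 𝕜} {A : Matrix ι ι 𝕜} {r : ι → 𝕜}
    {t : 𝕜} (he : HasDerivAt e (A *ᵥ e t + r) t) (hφ : HasDerivAt φ (-(Aᵀ *ᵥ φ t) - ψ t) t) :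
    HasDerivAt (fun s => e s ⬝ᵥ φ s) (r ⬝ᵥ φ t - e t ⬝ᵥ ψ t) t := by
  convert he.dotProduct hφ using 1
  rw [add_dotProduct, dotProduct_sub, dotProduct_neg, dotProduct_transpose_mulVec,
    dotProduct_comm (A *ᵥ e t)]
  ring

end Calculus

theorem integral_dotProduct_sub_of_adjoint {ι : Type*} [Fintype ι] {a b : ℝ} (hab : a ≤ b)
    {e φ ψ r : ℝ → ι → ℝ} {A : ℝ → Matrix ι ι ℝ}
    (he : ∀ t ∈ Set.Icc a b, HasDerivAt e (A t *ᵥ e t + r t) t)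
    (hφ : ∀ t ∈ Set.Icc a b, HasDerivAt φ (-((A t)ᵀ *ᵥ φ t) - ψ t) t)
    (hr : ContinuousOn r (Set.Icc a b)) (hψ : ContinuousOn ψ (Set.Icc a b)) :
    e b ⬝ᵥ φ b - e a ⬝ᵥ φ a = (∫ t in a..b, r t ⬝ᵥ φ t) - ∫ t in a..b, e t ⬝ᵥ ψ t := by
  have hrφ : IntervalIntegrable (fun t => r t ⬝ᵥ φ t) MeasureTheory.volume a b := by
    refine ContinuousOn.intervalIntegrable ?_
    rw [Set.uIcc_of_le hab]
    exact hr.dotProduct (HasDerivAt.continuousOn hφ)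
  have heψ : IntervalIntegrable (fun t => e t ⬝ᵥ ψ t) MeasureTheory.volume a b := by
    refine ContinuousOn.intervalIntegrable ?_
    rw [Set.uIcc_of_le hab]
    exact (HasDerivAt.continuousOn he).dotProduct hψ
  rw [← integral_sub hrφ heψ]
  refine (integral_eq_sub_of_hasDerivAt (f := fun s => e s ⬝ᵥ φ s) ?_ (hrφ.sub heψ)).symm
  rw [Set.uIcc_of_le hab]
  exact fun t ht => (he t ht).dotProduct_of_adjoint (hφ t ht)

theorem sdc_error_representation_general
    (d : ℕ) (T : ℝ) (hT : 0 ≤ T)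
    (f : (Fin d → ℝ) → ℝ → (Fin d → ℝ))
    (y Y Y' φ ψ : ℝ → Fin d → ℝ) (y₀ ψT : Fin d → ℝ)
    (H : ℝ → Matrix (Fin d) (Fin d) ℝ)
    (hy : ∀ t ∈ Set.Icc 0 T, HasDerivAt y (f (y t) t) t)
    (hy0 : y 0 = y₀)
    (hY : ∀ t ∈ Set.Icc 0 T, HasDerivAt Y (Y' t) t)
    (hY0 : Y 0 = y₀)
    (hY'c : Continuous Y')
    (hψc : Continuous ψ)
    (hfYc : Continuous fun t => f (Y t) t)
    (hH : ∀ t ∈ Set.Icc 0 T, (H t).mulVec (y t - Y t) = f (y t) t - f (Y t) t)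
    (hφ : ∀ t ∈ Set.Icc 0 T,
      HasDerivAt φ (-((H t)ᵀ.mulVec (φ t)) - ψ t) t)
    (hφT : φ T = ψT) :
    (∫ t in (0:ℝ)..T, (y t - Y t) ⬝ᵥ ψ t) + (y T - Y T) ⬝ᵥ ψT
      = ∫ t in (0:ℝ)..T, (f (Y t) t - Y' t) ⬝ᵥ φ t := by
  have he : ∀ t ∈ Set.Icc 0 T,
      HasDerivAt (fun s => y s - Y s) (H t *ᵥ (y t - Y t) + (f (Y t) t - Y' t)) t := by
    intro t ht
    rw [hH t ht, sub_add_sub_cancel]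
    exact (hy t ht).sub (hY t ht)
  have hrepr := integral_dotProduct_sub_of_adjoint hT he hφ
    (hfYc.sub hY'c).continuousOn hψc.continuousOn
  simp only [hy0, hY0, sub_self, zero_dotProduct, sub_zero, hφT] at hrepr
  linarith

/-- Adjoint-based error representation: if `y' = f(y,t)` with `y(0) = y₀`,
`Y` is a C¹ approximation with `Y(0) = y₀`, `H` is the averaged Jacobian with
`H(t)(y(t) − Y(t)) = f(y(t),t) − f(Y(t),t)` and `φ` solves the adjoint problem
`−φ' = Hᵀφ + ψ`, `φ(T) = ψ_T`, then
`∫₀ᵀ (e,ψ) dt + (e(T),ψ_T) = ∫₀ᵀ (f(Y,t) − Y', φ) dt` where `e = y − Y`. -/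
theorem sdc_error_representation
    (d : ℕ) (T : ℝ) (hT : 0 ≤ T)
    (f : (Fin d → ℝ) → ℝ → (Fin d → ℝ))
    (y Y Y' φ ψ : ℝ → Fin d → ℝ) (y₀ ψT : Fin d → ℝ)
    (H : ℝ → Matrix (Fin d) (Fin d) ℝ)
    (hy : ∀ t ∈ Set.Icc 0 T, HasDerivAt y (f (y t) t) t)
    (hy0 : y 0 = y₀)
    (hY : ∀ t ∈ Set.Icc 0 T, HasDerivAt Y (Y' t) t)
    (hY0 : Y 0 = y₀)
    (hY'c : Continuous Y')
    (hψc : Continuous ψ)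
    (hφc : Continuous φ)
    (hyc : Continuous y) (hYc : Continuous Y)
    (hfyc : Continuous fun t => f (y t) t)
    (hfYc : Continuous fun t => f (Y t) t)
    (hHc : Continuous H)
    (hH : ∀ t ∈ Set.Icc 0 T, (H t).mulVec (y t - Y t) = f (y t) t - f (Y t) t)
    (hφ : ∀ t ∈ Set.Icc 0 T,
      HasDerivAt φ (-((H t)ᵀ.mulVec (φ t)) - ψ t) t)
    (hφT : φ T = ψT) :
    (∫ t in (0:ℝ)..T, (y t - Y t) ⬝ᵥ ψ t) + (y T - Y T) ⬝ᵥ ψT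
      = ∫ t in (0:ℝ)..T, (f (Y t) t - Y' t) ⬝ᵥ φ t :=
  sdc_error_representation_general d T hT f y Y Y' φ ψ y₀ ψT H hy hy0 hY hY0 hY'c hψc hfYc hH hφ hφT
end

section
/- Suppose the sequences {Y^{k+1}_{n,m}} generated by the explicit SDC update Y^{k+1}_{n,m+1} = Y^{k+1}_{n,m} + Δt_{n,m}[f(Y^{k+1}_{n,m}, t_{n,m}) − f(Y^k_{n,m}, t_{n,m})] + ∫_{I_{n,m}} S_n f^k dt, and a continuous piecewise-polynomial function Y^{k+1} ∈ C^q satisfying, on every subinterval I_{n,m} and for all test polynomials v of degree ≤ q−1, ⟨Ẏ^{k+1}, v⟩_{I_{n,m}} = ⟨f(Y^{k+1},·) − f(Y^k,·), v⟩_{LHR,I_{n,m}} + ⟨S_n f^k, v⟩_{I_{n,m}}, with Y^{k+1}(0) = y₀ and Y^k(t_{n,m}) = Y^k_{n,m}. Then Y^{k+1}(t_{n,m}) = Y^{k+1}_{n,m} for all n, m. -/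
/-- Nodal equivalence of the explicit SDC method and its finite element
formulation: if the values `Ysdc n m` satisfy the explicit SDC update
`Y^{k+1}_{n,m+1} = Y^{k+1}_{n,m} + Δt_{n,m}[f(Y^{k+1}_{n,m},t_{n,m}) −
f(Y^k_{n,m},t_{n,m})] + ∫_{I_{n,m}} S_n f^k dt`, and the continuous
piecewise-polynomial `Ynew ∈ C^q` satisfies, on every subinterval and for all
polynomial test functions `v` of degree ≤ q−1, the variational relation with
left-hand-rule quadrature, then `Ynew(t_{n,m}) = Y^{k+1}_{n,m}` for all n, m. -/
theorem sdc_explicit_nodal_equivalence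
    (d N M q : ℕ) (hq : 1 ≤ q) (hM : 1 ≤ M)
    (t : ℕ → ℕ → ℝ)
    (hord : ∀ n < N, ∀ m < M, t n m < t n (m + 1))
    (hlink : ∀ n, n + 1 < N → t n M = t (n + 1) 0)
    (y₀ : Fin d → ℝ)
    (f : (Fin d → ℝ) → ℝ → (Fin d → ℝ))
    -- previous SDC iterate as a function and the interpolant S_n f^k
    (Yk : ℝ → Fin d → ℝ) (Sf : ℕ → ℝ → Fin d → ℝ)
    -- the explicit SDC iterate values Y^{k+1}_{n,m}
    (Ysdc : ℕ → ℕ → Fin d → ℝ)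
    (hsdc0 : Ysdc 0 0 = y₀)
    (hsdclink : ∀ n, n + 1 < N → Ysdc n M = Ysdc (n + 1) 0)
    (hsdc : ∀ n < N, ∀ m < M,
      Ysdc n (m + 1) = Ysdc n m
        + (t n (m + 1) - t n m) •
            (f (Ysdc n m) (t n m) - f (Yk (t n m)) (t n m))
        + fun j => ∫ s in (t n m)..(t n (m + 1)), Sf n s j)
    -- the new FEM iterate: piecewise polynomial of degree ≤ q with derivative Y'
    (Ynew Y' : ℝ → Fin d → ℝ)
    (hY0 : Ynew (t 0 0) = y₀)
    (hpoly : ∀ n < N, ∀ m < M, ∃ p : Fin d → Polynomial ℝ,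
      (∀ j, (p j).degree ≤ q) ∧
      ∀ s ∈ Set.Icc (t n m) (t n (m + 1)), ∀ j,
        Ynew s j = (p j).eval s ∧ Y' s j = (p j).derivative.eval s)
    -- the finite element relation with left-hand rule quadrature
    (hfem : ∀ n < N, ∀ m < M, ∀ v : Polynomial ℝ,
      v.degree ≤ (q - 1 : ℕ) → ∀ j : Fin d,
      (∫ s in (t n m)..(t n (m + 1)), Y' s j * v.eval s)
        = (t n (m + 1) - t n m)
            * ((f (Ynew (t n m)) (t n m) j - f (Yk (t n m)) (t n m) j)
              * v.eval (t n m))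
          + ∫ s in (t n m)..(t n (m + 1)), Sf n s j * v.eval s) :
    ∀ n < N, ∀ m ≤ M, Ynew (t n m) = Ysdc n m := by

  -- Step: on each subinterval, Ynew advances exactly like the SDC update.
  have key : ∀ n < N, ∀ m < M,
      Ynew (t n (m + 1)) = Ynew (t n m)
        + (t n (m + 1) - t n m) •
            (f (Ynew (t n m)) (t n m) - f (Yk (t n m)) (t n m))
        + fun j => ∫ s in (t n m)..(t n (m + 1)), Sf n s j := by
    intro n hn m hm
    obtain ⟨p, hpdeg, hp⟩ := hpoly n hn m hm
    have hle : t n m ≤ t n (m + 1) := (hord n hn m hm).le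
    funext j
    -- FTC for the polynomial piece
    have hftc : (∫ s in (t n m)..(t n (m + 1)), Y' s j)
        = Ynew (t n (m + 1)) j - Ynew (t n m) j := by
      have hcong : (∫ s in (t n m)..(t n (m + 1)), Y' s j)
          = ∫ s in (t n m)..(t n (m + 1)), (p j).derivative.eval s := by
        apply intervalIntegral.integral_congr
        intro s hs
        rw [Set.uIcc_of_le hle] at hs
        exact (hp s hs j).2
      have hsub : (∫ s in (t n m)..(t n (m + 1)), (p j).derivative.eval s)
          = (p j).eval (t n (m + 1)) - (p j).eval (t n m) := by
        refine intervalIntegral.integral_eq_sub_of_hasDerivAt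
          (f := fun s => Polynomial.eval s (p j)) ?_ ?_
        · intro s _; exact (p j).hasDerivAt s
        · exact ((p j).derivative.continuous).intervalIntegrable _ _
      rw [hcong, hsub,
        (hp (t n (m+1)) (Set.right_mem_Icc.2 hle) j).1,
        (hp (t n m) (Set.left_mem_Icc.2 hle) j).1]
    -- take v = 1 in the FEM relation
    have hdeg1 : (1 : Polynomial ℝ).degree ≤ (q - 1 : ℕ) := by
      rw [Polynomial.degree_one]
      exact_mod_cast Nat.zero_le (q - 1)
    have h1 := hfem n hn m hm 1 hdeg1 j
    simp only [Polynomial.eval_one, mul_one] at h1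
    rw [hftc] at h1
    have : Ynew (t n (m + 1)) j = Ynew (t n m) j
        + (t n (m + 1) - t n m)
            * (f (Ynew (t n m)) (t n m) j - f (Yk (t n m)) (t n m) j)
        + ∫ s in (t n m)..(t n (m + 1)), Sf n s j := by linarith
    simpa [Pi.add_apply, Pi.smul_apply, Pi.sub_apply, smul_eq_mul] using this
  -- For a fixed n, propagate along the subnodes from m = 0.
  have step : ∀ n < N, Ynew (t n 0) = Ysdc n 0 → ∀ m ≤ M, Ynew (t n m) = Ysdc n m := by
    intro n hn h0 m hm
    induction m with
    | zero => exact h0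
    | succ m ih =>
      have hmM : m < M := hm
      have ihm := ih (Nat.le_of_lt hm)
      rw [key n hn m hmM, hsdc n hn m hmM, ihm]
  intro n hn
  induction n with
  | zero => exact step 0 hn (by rw [hY0, hsdc0])
  | succ n ih =>
    have hnN : n < N := Nat.lt_of_succ_lt hn
    have hM0 : Ynew (t n M) = Ysdc n M := ih hnN M le_rfl
    refine step (n + 1) hn ?_
    rw [← hlink n hn, hM0, hsdclink n hn]
end

section
/- Let e = y − Y^K and suppose Q(e) = Σ_{n,m} ⟨f(Y^K,·) − Ẏ^K, φ⟩_{I_{n,m}} (the basic error representation) and the Galerkin orthogonality ⟨Ẏ^K, π_{n,m}φ⟩_{I_{n,m}} − ⟨f(Y^K,·) − f(Y^{K−1},·), π_{n,m}φ⟩_{R,I_{n,m}} − ⟨S_n f^{K−1}, π_{n,m}φ⟩_{I_{n,m}} = 0 holds on each subinterval for a projection π_{n,m}φ into degree-(q−1) polynomials. Then Q(e) = E_D + E_M + E_K where E_D = Σ_{n,m}[⟨S_n f^{K−1} − Ẏ^K, φ − π_{n,m}φ⟩_{I_{n,m}} + ⟨f(Y^K,·) − f(Y^{K−1},·), φ −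 π_{n,m}φ⟩_{R,I_{n,m}}], E_M = Σ_{n,m}⟨f(Y^K,·) − S_n f^K, φ⟩_{I_{n,m}}, and E_K = Σ_{n,m}[⟨f(Y^{K−1},·) − f(Y^K,·), φ⟩_{R,I_{n,m}} + ⟨S_n f^K − S_n f^{K−1}, φ⟩_{I_{n,m}}]. -/
open Matrix

/-- Decomposition of the a posteriori error into discretization (`E_D`),
interpolation (`E_M`) and iteration (`E_K`) contributions: given the basic
error representation `Q(e) = Σ_{n,m} ⟨f(Y^K,·) − Ẏ^K, φ⟩_{I_{n,m}}` and the
Galerkin orthogonality relation on each subinterval, one has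
`Q(e) = E_D + E_M + E_K`.  The quadrature pairing `⟨u,v⟩_{R,I_{n,m}}` is
`Δt_{n,m}·(u(θ_{n,m}), v(θ_{n,m}))`, covering both the left- and right-hand
rules via the evaluation point `θ n m`. -/
theorem sdc_error_decomposition
    (d N M : ℕ) (t : ℕ → ℕ → ℝ) (θ : ℕ → ℕ → ℝ)
    -- the composite functions s ↦ f(Y^K(s),s), s ↦ f(Y^{K−1}(s),s),
    -- the interpolants S_n f^K, S_n f^{K−1}, the derivative Ẏ^K,
    -- the adjoint solution φ and its projections π_{n,m} φ
    (fYK fYK1 dYK φ : ℝ → Fin d → ℝ)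
    (SfK SfK1 : ℕ → ℝ → Fin d → ℝ)
    (πφ : ℕ → ℕ → ℝ → Fin d → ℝ)
    (Qe : ℝ)
    -- basic error representation (Theorem 3.1)
    (hQ : Qe = ∑ n ∈ Finset.range N, ∑ m ∈ Finset.range M,
      ∫ s in (t n m)..(t n (m + 1)), (fYK s - dYK s) ⬝ᵥ φ s)
    -- Galerkin orthogonality of the equivalent FEM method
    (hGal : ∀ n ∈ Finset.range N, ∀ m ∈ Finset.range M,
      (∫ s in (t n m)..(t n (m + 1)), dYK s ⬝ᵥ πφ n m s)
        - (t n (m + 1) - t n m) *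
            ((fYK (θ n m) - fYK1 (θ n m)) ⬝ᵥ πφ n m (θ n m))
        - (∫ s in (t n m)..(t n (m + 1)), SfK1 n s ⬝ᵥ πφ n m s) = 0)
    -- integrability of all the integrands involved
    (hint : ∀ (n m : ℕ) (u : ℝ → Fin d → ℝ) (v : ℝ → Fin d → ℝ),
      (u = fYK ∨ u = fYK1 ∨ u = dYK ∨ u = SfK n ∨ u = SfK1 n) →
      (v = φ ∨ v = πφ n m) →
      IntervalIntegrable (fun s => u s ⬝ᵥ v s) MeasureTheory.volume
        (t n m) (t n (m + 1))) :
    Qe =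
      -- E_D : discretization contribution
      (∑ n ∈ Finset.range N, ∑ m ∈ Finset.range M,
        ((∫ s in (t n m)..(t n (m + 1)),
            (SfK1 n s - dYK s) ⬝ᵥ (φ s - πφ n m s))
          + (t n (m + 1) - t n m) *
              ((fYK (θ n m) - fYK1 (θ n m)) ⬝ᵥ (φ (θ n m) - πφ n m (θ n m)))))
      -- E_M : interpolation contribution
      + (∑ n ∈ Finset.range N, ∑ m ∈ Finset.range M,
          ∫ s in (t n m)..(t n (m + 1)), (fYK s - SfK n s) ⬝ᵥ φ s)
      -- E_K : iteration contribution
      + (∑ n ∈ Finset.range N, ∑ m ∈ Finset.range M,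
          ((t n (m + 1) - t n m) *
              ((fYK1 (θ n m) - fYK (θ n m)) ⬝ᵥ φ (θ n m))
            + ∫ s in (t n m)..(t n (m + 1)),
                (SfK n s - SfK1 n s) ⬝ᵥ φ s)) := by

  rw [hQ, ← Finset.sum_add_distrib, ← Finset.sum_add_distrib]
  refine Finset.sum_congr rfl fun n hn => ?_
  rw [← Finset.sum_add_distrib, ← Finset.sum_add_distrib]
  refine Finset.sum_congr rfl fun m hm => ?_
  have key := hGal n hn m hm
  have hAφ := hint n m fYK φ (Or.inl rfl) (Or.inl rfl)
  have hBφ := hint n m dYK φ (Or.inr (Or.inr (Or.inl rfl))) (Or.inl rfl)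
  have hCφ := hint n m (SfK1 n) φ (Or.inr (Or.inr (Or.inr (Or.inr rfl)))) (Or.inl rfl)
  have hDφ := hint n m (SfK n) φ (Or.inr (Or.inr (Or.inr (Or.inl rfl)))) (Or.inl rfl)
  have hBπ := hint n m dYK (πφ n m) (Or.inr (Or.inr (Or.inl rfl))) (Or.inr rfl)
  have hCπ := hint n m (SfK1 n) (πφ n m) (Or.inr (Or.inr (Or.inr (Or.inr rfl)))) (Or.inr rfl)
  have h1 : (∫ s in (t n m)..(t n (m + 1)), (fYK s - dYK s) ⬝ᵥ φ s)
      = (∫ s in (t n m)..(t n (m + 1)), fYK s ⬝ᵥ φ s)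
        - (∫ s in (t n m)..(t n (m + 1)), dYK s ⬝ᵥ φ s) := by
    simp only [sub_dotProduct]
    exact intervalIntegral.integral_sub hAφ hBφ
  have h2 : (∫ s in (t n m)..(t n (m + 1)), (SfK1 n s - dYK s) ⬝ᵥ (φ s - πφ n m s))
      = ((∫ s in (t n m)..(t n (m + 1)), SfK1 n s ⬝ᵥ φ s)
          - (∫ s in (t n m)..(t n (m + 1)), SfK1 n s ⬝ᵥ πφ n m s))
        - ((∫ s in (t n m)..(t n (m + 1)), dYK s ⬝ᵥ φ s)
          - (∫ s in (t n m)..(t n (m + 1)), dYK s ⬝ᵥ πφ n m s)) := by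
    simp only [sub_dotProduct, dotProduct_sub]
    rw [intervalIntegral.integral_sub (hCφ.sub hBφ) (hCπ.sub hBπ),
      intervalIntegral.integral_sub hCφ hBφ, intervalIntegral.integral_sub hCπ hBπ]
    ring
  have h3 : (∫ s in (t n m)..(t n (m + 1)), (fYK s - SfK n s) ⬝ᵥ φ s)
      = (∫ s in (t n m)..(t n (m + 1)), fYK s ⬝ᵥ φ s)
        - (∫ s in (t n m)..(t n (m + 1)), SfK n s ⬝ᵥ φ s) := by
    simp only [sub_dotProduct]
    exact intervalIntegral.integral_sub hAφ hDφ
  have h4 : (∫ s in (t n m)..(t n (m + 1)), (SfK n s - SfK1 n s) ⬝ᵥ φ s)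
      = (∫ s in (t n m)..(t n (m + 1)), SfK n s ⬝ᵥ φ s)
        - (∫ s in (t n m)..(t n (m + 1)), SfK1 n s ⬝ᵥ φ s) := by
    simp only [sub_dotProduct]
    exact intervalIntegral.integral_sub hDφ hCφ
  rw [h1, h2, h3, h4]
  simp only [sub_dotProduct, dotProduct_sub] at key ⊢
  ring_nf
  ring_nf at key
  linarith
end
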